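/- arXiv:1104.4433 — 2 statements merged into one kernel-verified Lean document; each statement's English description precedes it below -/
import Mathlib

section
/- Let G=(V,E) be a graph with V={1,...,n}. Define arc-annotated sequences S1=S2=a^n over alphabet {a}, with arc sets P1=E and P2=∅. Then G has an independent set of size at least k if and only if S1 and S2 have an arc-preserving common subsequence of length at least k in which every matched pair of positions (i,j) satisfies i=j. -/
/-! A diagonal matching is the diagonal of its set of matched positions, so diagonal matchings
and vertex sets correspond bijectively with equal sizes. Since `P2 = ∅`, arc-preservation of the
diagonal of `I` says exactly that no edge of `E` joins two vertices of `I`. -/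

open Finset

namespace Finset

variable {α : Type*}

theorem forall_mem_diag {s : Finset α} {P : α × α → Prop} :
    (∀ p ∈ s.diag, P p) ↔ ∀ i ∈ s, P (i, i) := by
  simp only [diag, forall_mem_map]
  rfl

theorem diag_image_fst [DecidableEq α] {M : Finset (α × α)} (hM : ∀ p ∈ M, p.1 = p.2) :
    (M.image Prod.fst).diag = M := by
  ext ⟨i, j⟩
  simp only [mem_diag, mem_image]
  constructor
  · rintro ⟨⟨p, hp, rfl⟩, rfl⟩
    rwa [show (p.1, p.1) = p from Prod.ext rfl (hM p hp)]
  · intro h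
    exact ⟨⟨(i, j), h, rfl⟩, hM _ h⟩

end Finset

theorem stmt0_general (n k : ℕ) (E : Finset (ℕ × ℕ)) :
    (∃ I : Finset ℕ, I ⊆ Finset.Icc 1 n ∧
        (∀ i ∈ I, ∀ j ∈ I, (i, j) ∉ E) ∧ k ≤ I.card) ↔
    (∃ M : Finset (ℕ × ℕ),
        (∀ p ∈ M, p.1 = p.2 ∧ 1 ≤ p.1 ∧ p.1 ≤ n) ∧
        (∀ p ∈ M, ∀ q ∈ M, ((p.1, q.1) ∈ E ↔ (p.2, q.2) ∈ (∅ : Finset (ℕ × ℕ)))) ∧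
        k ≤ M.card) := by
  constructor
  · rintro ⟨I, hI, hind, hk⟩
    refine ⟨I.diag, forall_mem_diag.2 fun i hi => ⟨rfl, mem_Icc.1 (hI hi)⟩,
      forall_mem_diag.2 fun i hi => forall_mem_diag.2 fun j hj => ?_, by rwa [diag_card]⟩
    simpa using hind i hi j hj
  · rintro ⟨M, hM, harc, hk⟩
    have hdiag := diag_image_fst fun p hp => (hM p hp).1
    rw [← hdiag] at hM harc hk
    refine ⟨M.image Prod.fst, fun i hi => mem_Icc.2 (forall_mem_diag.1 hM i hi).2,
      fun i hi j hj hij => ?_, by rwa [diag_card] at hk⟩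
    simpa using (forall_mem_diag.1 (forall_mem_diag.1 harc i hi) j hj).1 hij

/-- For a graph `G = ({1,…,n}, E)` (edges stored with smaller
endpoint first), with arc-annotated sequences `S1 = S2 = a^n`, `P1 = E`,
`P2 = ∅`, `G` has an independent set of size ≥ k iff there is an
arc-preserving common subsequence of length ≥ k whose matches are all
diagonal (position `i` matched to position `i`). -/
theorem stmt0 (n k : ℕ) (E : Finset (ℕ × ℕ))
    (hE : ∀ p ∈ E, 1 ≤ p.1 ∧ p.1 < p.2 ∧ p.2 ≤ n) :
    (∃ I : Finset ℕ, I ⊆ Finset.Icc 1 n ∧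
        (∀ i ∈ I, ∀ j ∈ I, (i, j) ∉ E) ∧ k ≤ I.card) ↔
    (∃ M : Finset (ℕ × ℕ),
        (∀ p ∈ M, p.1 = p.2 ∧ 1 ≤ p.1 ∧ p.1 ≤ n) ∧
        (∀ p ∈ M, ∀ q ∈ M, ((p.1, q.1) ∈ E ↔ (p.2, q.2) ∈ (∅ : Finset (ℕ × ℕ)))) ∧
        k ≤ M.card) :=
  stmt0_general n k E
end

section
/- Let G=(V,E) be a connected loopless graph on {1,...,n}, and let S1=S2=(b a^n b)^n with arc sets P1 (encoding E via (α,β): α=(i−1)(n+2)+j+1, β=(j−1)(n+2)+i+1 for (i,j) ∈ E, plus block arcs ((i−1)(n+2)+1, i(n+2)) for each i) and P2 (block arcs only). If G has an independent set I of size k, then M = {(j,j) : j=(i−1)(n+2)+l, i ∈ I, 1 ≤ l ≤ n+2} is a diagonal arc-preserving mapping between (S1,P1) and (S2,P2) of size k(n+2). -/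
/-!
Position `l` of the `i`-th block `b aⁿ b` is `(i - 1)(n + 2) + l`, and this encoding is injective.
Every edge arc `(α, β)` coming from `(i, j) ∈ E` has its left end inside block `i` and its right end
inside block `j`, so it joins two positions of `M` only if both `i` and `j` lie in `I`, which the
independence of `I` forbids. Hence on `M` the arcs of `P1` are exactly the block arcs, i.e. those
of `P2`.
-/

open Finset

theorem Nat.mul_add_injective_of_lt {m a a' b b' : ℕ} (hb : b < m) (hb' : b' < m)
    (h : a * m + b = a' * m + b') : a = a' ∧ b = b' := by
  have hm : 0 < m := by omega
  have divMod : ∀ a b, b < m → (a * m + b) / m = a ∧ (a * m + b) % m = b :=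
    fun a b hb => (Nat.div_mod_unique hm).2 ⟨by ring, hb⟩
  obtain ⟨hdiv, hmod⟩ := divMod a b hb
  obtain ⟨hdiv', hmod'⟩ := divMod a' b' hb'
  rw [h] at hdiv hmod
  exact ⟨hdiv.symm.trans hdiv', hmod.symm.trans hmod'⟩

theorem block_pos_injective {m i i' l l' : ℕ} (hi : 1 ≤ i) (hi' : 1 ≤ i')
    (hl : l ∈ Icc 1 m) (hl' : l' ∈ Icc 1 m)
    (h : (i - 1) * m + l = (i' - 1) * m + l') : i = i' ∧ l = l' := by
  rw [mem_Icc] at hl hl'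
  have := Nat.mul_add_injective_of_lt (a := i - 1) (a' := i' - 1)
    (show l - 1 < m by omega) (show l' - 1 < m by omega) (by omega)
  omega

def blockPositions (m : ℕ) (I : Finset ℕ) : Finset ℕ :=
  (I ×ˢ Icc 1 m).image fun q => (q.1 - 1) * m + q.2

variable {m : ℕ} {I : Finset ℕ}

theorem mem_blockPositions_iff (hI : ∀ i ∈ I, 1 ≤ i) {i l : ℕ} (hi : 1 ≤ i) (hl : l ∈ Icc 1 m) :
    (i - 1) * m + l ∈ blockPositions m I ↔ i ∈ I := by
  constructor
  · simp only [blockPositions, mem_image, mem_product]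
    rintro ⟨⟨i', l'⟩, ⟨hi'I, hl'⟩, heq⟩
    exact (block_pos_injective (hI i' hi'I) hi hl' hl heq).1 ▸ hi'I
  · intro hiI
    exact mem_image.2 ⟨(i, l), mem_product.2 ⟨hiI, hl⟩, rfl⟩

theorem card_blockPositions (hI : ∀ i ∈ I, 1 ≤ i) : (blockPositions m I).card = I.card * m := by
  rw [blockPositions, card_image_of_injOn, card_product, Nat.card_Icc, Nat.add_sub_cancel]
  rintro ⟨i, l⟩ hil ⟨i', l'⟩ hil' heq
  simp only [coe_product, Set.mem_prod, mem_coe] at hil hil'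
  obtain ⟨rfl, rfl⟩ := block_pos_injective (hI i hil.1) (hI i' hil'.1) hil.2 hil'.2 heq
  rfl

theorem stmt7_general (n k : ℕ) (E : Set (ℕ × ℕ))
    (P1 P2 : Set (ℕ × ℕ))
    (hP1 : ∀ α β : ℕ, ((α, β) ∈ P1 ↔
      ((∃ i ∈ Finset.Icc 1 n, ∃ j ∈ Finset.Icc 1 n, (i, j) ∈ E ∧
          α = (i - 1) * (n + 2) + j + 1 ∧ β = (j - 1) * (n + 2) + i + 1) ∨
       (∃ i ∈ Finset.Icc 1 n, α = (i - 1) * (n + 2) + 1 ∧ β = i * (n + 2)))))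
    (hP2 : ∀ α β : ℕ, ((α, β) ∈ P2 ↔
      ∃ i ∈ Finset.Icc 1 n, α = (i - 1) * (n + 2) + 1 ∧ β = i * (n + 2)))
    (I : Finset ℕ) (hI : I ⊆ Finset.Icc 1 n)
    (hind : ∀ i ∈ I, ∀ j ∈ I, (i, j) ∉ E) (hcard : I.card = k) :
    ∃ M : Finset ℕ,
      M = (I ×ˢ Finset.Icc 1 (n + 2)).image (fun q => (q.1 - 1) * (n + 2) + q.2) ∧
      (∀ p ∈ M, ∀ q ∈ M, ((p, q) ∈ P1 ↔ (p, q) ∈ P2)) ∧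
      M.card = k * (n + 2) := by
  have hIpos : ∀ i ∈ I, 1 ≤ i := fun i hi => (mem_Icc.1 (hI hi)).1
  refine ⟨blockPositions (n + 2) I, rfl, fun p hp q hq => ?_, hcard ▸ card_blockPositions hIpos⟩
  rw [hP1, hP2, or_iff_right_iff_imp]
  rintro ⟨i, hi, j, hj, hij, rfl, rfl⟩
  rw [mem_Icc] at hi hj
  have hiI : i ∈ I := (mem_blockPositions_iff (m := n + 2) (l := j + 1) hIpos hi.1
    (mem_Icc.2 ⟨by omega, by omega⟩)).1 (by rwa [← add_assoc])
  have hjI : j ∈ I := (mem_blockPositions_iff (m := n + 2) (l := i + 1) hIpos hj.1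
    (mem_Icc.2 ⟨by omega, by omega⟩)).1 (by rwa [← add_assoc])
  exact absurd hij (hind i hiI j hjI)

/-- Let `G = ({1,…,n}, E)` be a connected loopless graph and
`S1 = S2 = (b a^n b)^n` with arc sets `P1` (edge arcs plus block arcs) and `P2`
(block arcs only).  If `G` has an independent set `I` of size `k`, then the set
of positions `M = {(i−1)(n+2)+l : i ∈ I, 1 ≤ l ≤ n+2}` (matching each position
to itself) is a diagonal arc-preserving mapping between `(S1,P1)` and
`(S2,P2)` of size `k(n+2)`. -/
theorem stmt7 (n k : ℕ) (E : Set (ℕ × ℕ))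
    (hE : ∀ p ∈ E, 1 ≤ p.1 ∧ p.1 ≤ n ∧ 1 ≤ p.2 ∧ p.2 ≤ n ∧ p.1 ≠ p.2)
    (hsym : ∀ p ∈ E, (p.2, p.1) ∈ E)
    (hconn : ∀ u ∈ Finset.Icc 1 n, ∀ v ∈ Finset.Icc 1 n, u ≠ v →
      Relation.ReflTransGen (fun x y => (x, y) ∈ E) u v)
    (P1 P2 : Set (ℕ × ℕ))
    (hP1 : ∀ α β : ℕ, ((α, β) ∈ P1 ↔
      ((∃ i ∈ Finset.Icc 1 n, ∃ j ∈ Finset.Icc 1 n, (i, j) ∈ E ∧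
          α = (i - 1) * (n + 2) + j + 1 ∧ β = (j - 1) * (n + 2) + i + 1) ∨
       (∃ i ∈ Finset.Icc 1 n, α = (i - 1) * (n + 2) + 1 ∧ β = i * (n + 2)))))
    (hP2 : ∀ α β : ℕ, ((α, β) ∈ P2 ↔
      ∃ i ∈ Finset.Icc 1 n, α = (i - 1) * (n + 2) + 1 ∧ β = i * (n + 2)))
    (I : Finset ℕ) (hI : I ⊆ Finset.Icc 1 n)
    (hind : ∀ i ∈ I, ∀ j ∈ I, (i, j) ∉ E) (hcard : I.card = k) :
    ∃ M : Finset ℕ,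
      M = (I ×ˢ Finset.Icc 1 (n + 2)).image (fun q => (q.1 - 1) * (n + 2) + q.2) ∧
      (∀ p ∈ M, ∀ q ∈ M, ((p, q) ∈ P1 ↔ (p, q) ∈ P2)) ∧
      M.card = k * (n + 2) :=
  stmt7_general n k E P1 P2 hP1 hP2 I hI hind hcard
end
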